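/- Let G be a group such that Aut(G) is residually finite, and let H ≤ G be an Aut-splitting subgroup of G. Then the canonical projection f : Aut(G) → Out(G) splits virtually; moreover Out(G) is residually finite. -/

import Mathlib

section Defs

variable (G : Type*) [Group G]

/-- The subgroup of inner automorphisms of `G`. -/
def Inn : Subgroup (MulAut G) := (MulAut.conj : G →* MulAut G).range

instance Inn.normal : (Inn G).Normal := by
  constructor
  intro n hn φ
  obtain ⟨g, rfl⟩ := hn
  refine ⟨φ g, ?_⟩
  ext x
  simp only [MulAut.conj_apply, MulAut.mul_apply, map_mul, map_inv, MulAut.inv_def,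
    MulEquiv.apply_symm_apply]

/-- The outer automorphism group `Out(G) = Aut(G)/Inn(G)`. -/
def Out := MulAut G ⧸ Inn G

instance : Group (Out G) := inferInstanceAs (Group (MulAut G ⧸ Inn G))

/-- The canonical projection `Aut(G) → Out(G)`. -/
def outProj : MulAut G →* Out G := QuotientGroup.mk' (Inn G)

/-- A surjective homomorphism `f : A → B` splits virtually if it admits a section on some
finite-index subgroup of `B`. -/
def SplitsVirtually {A B : Type*} [Group A] [Group B] (f : A →* B) : Prop :=
  ∃ B' : Subgroup B, B'.FiniteIndex ∧ ∃ s : (↥B') →* A, ∀ x : B', f (s x) = (x : B)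

/-- A group is residually finite if every nontrivial element survives in some finite quotient. -/
def ResiduallyFinite (G : Type*) [Group G] : Prop :=
  ∀ g : G, g ≠ 1 → ∃ (F : Type) (_ : Group F) (_ : Finite F) (φ : G →* F), φ g ≠ 1

/-- A group is residually `p` if every nontrivial element survives in some finite `p`-group
quotient. -/
def ResiduallyP (p : ℕ) (G : Type*) [Group G] : Prop :=
  ∀ g : G, g ≠ 1 →
    ∃ (F : Type) (_ : Group F) (_ : Finite F) (φ : G →* F), IsPGroup p F ∧ φ g ≠ 1

/-- A group is virtually residually `p` if some finite-index subgroup is residually `p`. -/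
def VirtuallyResiduallyP (p : ℕ) (G : Type*) [Group G] : Prop :=
  ∃ K : Subgroup G, K.FiniteIndex ∧ ResiduallyP p ↥K

/-- `Aut_{H̲}(G)`: the subgroup of automorphisms of `G` fixing `H` pointwise. -/
def autFix (H : Subgroup G) : Subgroup (MulAut G) where
  carrier := {φ | ∀ h ∈ H, φ h = h}
  one_mem' := fun _ _ => rfl
  mul_mem' := by
    intro a b ha hb h hh
    show a (b h) = h
    rw [hb h hh, ha h hh]
  inv_mem' := by
    intro a ha h hh
    show a⁻¹ h = h
    calc a⁻¹ h = a⁻¹ (a h) := by rw [ha h hh]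
    _ = h := by rw [MulAut.inv_def]; exact a.symm_apply_apply h

/-- `Aut_H(G)`: the subgroup of automorphisms of `G` mapping `H` onto itself. -/
def autSetwise (H : Subgroup G) : Subgroup (MulAut G) where
  carrier := {φ | ∀ g : G, φ g ∈ H ↔ g ∈ H}
  one_mem' := fun _ => Iff.rfl
  mul_mem' := by
    intro a b ha hb g
    show a (b g) ∈ H ↔ g ∈ H
    rw [ha, hb]
  inv_mem' := by
    intro a ha g
    show a⁻¹ g ∈ H ↔ g ∈ H
    have h1 : a (a⁻¹ g) = g := by rw [MulAut.inv_def]; exact a.apply_symm_apply g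
    have := ha (a⁻¹ g)
    rw [h1] at this
    exact this.symm

theorem mem_autSetwise {H : Subgroup G} {φ : MulAut G} :
    φ ∈ autSetwise G H ↔ ∀ g : G, φ g ∈ H ↔ g ∈ H := Iff.rfl

/-- `H` is an Aut-splitting subgroup of `G` if the restriction of `Aut(G) → Out(G)` to
`Aut_{H̲}(G)` has finite kernel and an image of finite index in `Out(G)`. -/
def IsAutSplitting (H : Subgroup G) : Prop :=
  Finite ((outProj G).comp (autFix G H).subtype).ker ∧
    ((autFix G H).map (outProj G)).FiniteIndex

/-- The conjugate `gKg⁻¹` of a subgroup. -/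
def conjSubgroup (g : G) (K : Subgroup G) : Subgroup G :=
  K.map (MulAut.conj g).toMonoidHom

end Defs

/-!
Since `Aut(G)` is residually finite, so is `Aut_{H̲}(G)`, and a finite-index subgroup `N` of it
avoids the finite kernel of `Aut_{H̲}(G) → Out(G)`. The projection then maps `N` isomorphically
onto a finite-index subgroup of `Out(G)`, and the inverse isomorphism is the virtual section.
Its image is a subgroup of `Aut(G)`, hence residually finite, so `Out(G)` is virtually residually
finite and therefore residually finite.
-/

theorem residuallyFinite_iff_group_residuallyFinite {G : Type*} [Group G] :
    ResiduallyFinite G ↔ Group.ResiduallyFinite G := by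
  refine ⟨Group.residuallyFinite_of_forall_exists_finite_monoidHom, fun _ g hg => ?_⟩
  obtain ⟨K, hgK⟩ := Group.exists_finiteIndexNormalSubgroup_notMem g hg
  refine ⟨Shrink.{0} (G ⧸ K.toSubgroup), inferInstance, inferInstance,
    (Shrink.mulEquiv.symm : G ⧸ K.toSubgroup ≃* _).toMonoidHom.comp (QuotientGroup.mk' _), ?_⟩
  rw [← FiniteIndexNormalSubgroup.mem_toSubgroup_iff] at hgK
  simpa using hgK

namespace Group.ResiduallyFinite

variable {G G' : Type*} [Group G] [Group G']

theorem of_injective [ResiduallyFinite G'] (f : G →* G') (hf : Function.Injective f) :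
    ResiduallyFinite G := by
  rw [residuallyFinite_iff_forall_finiteIndexNormalSubgroup]
  intro g hg
  refine hf ((eq_one_iff_forall_finiteIndexNormalSubroup (f g) fun K => ?_).trans f.map_one.symm)
  exact hg (K.comap f)

theorem of_finiteIndex (H : Subgroup G) [H.FiniteIndex] [ResiduallyFinite H] :
    ResiduallyFinite G := by
  rw [residuallyFinite_iff_forall_finiteIndex]
  intro g hg
  have hgM : ∀ (M : Subgroup H) [M.FiniteIndex], (⟨g, hg H⟩ : H) ∈ M := by
    intro M _
    have : (M.map H.subtype).FiniteIndex := ⟨by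
      rw [Subgroup.index_map_subtype]
      exact mul_ne_zero Subgroup.FiniteIndex.index_ne_zero Subgroup.FiniteIndex.index_ne_zero⟩
    obtain ⟨m, hm, hmg⟩ := hg (M.map H.subtype)
    rwa [← (Subtype.ext hmg : m = ⟨g, hg H⟩)]
  simpa using congrArg Subtype.val (residuallyFinite_iff_forall_finiteIndex.mp ‹_› _ hgM)

theorem exists_finiteIndex_disjoint [ResiduallyFinite G] (K : Subgroup G) [Finite K] :
    ∃ N : Subgroup G, N.FiniteIndex ∧ Disjoint N K := by
  have hsep : ∀ k : {k : K // k ≠ 1}, ∃ M : Subgroup G, M.FiniteIndex ∧ (k : G) ∉ M :=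
    fun k => residuallyFinite_iff_exists_finiteIndex.mp ‹_› _ (by simpa using k.2)
  choose M hM hkM using hsep
  refine ⟨⨅ k, M k, Subgroup.finiteIndex_iInf hM, Subgroup.disjoint_def.mpr ?_⟩
  intro x hxN hxK
  by_contra hx
  exact hkM ⟨⟨x, hxK⟩, by simpa using hx⟩ (Subgroup.mem_iInf.mp hxN _)

end Group.ResiduallyFinite

theorem MonoidHom.exists_injective_virtual_section {A B : Type*} [Group A] [Group B]
    [Group.ResiduallyFinite A] (e : A →* B) [Finite e.ker] [e.range.FiniteIndex] :
    ∃ B' : Subgroup B, B'.FiniteIndex ∧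
      ∃ s : B' →* A, Function.Injective s ∧ ∀ x : B', e (s x) = x := by
  obtain ⟨N, hN, hNker⟩ := Group.ResiduallyFinite.exists_finiteIndex_disjoint e.ker
  have hinj : Function.Injective (e.domRestrict N) := by
    rw [← MonoidHom.ker_eq_bot_iff, MonoidHom.ker_domRestrict, Subgroup.subgroupOf_eq_bot]
    exact hNker.symm
  let iso := MonoidHom.ofInjective hinj
  refine ⟨(e.domRestrict N).range, ⟨?_⟩, N.subtype.comp iso.symm.toMonoidHom,
    N.subtype_injective.comp iso.symm.injective, MonoidHom.apply_ofInjective_symm hinj⟩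
  rw [MonoidHom.domRestrict_range, Subgroup.index_map]
  exact mul_ne_zero (Subgroup.finiteIndex_of_le le_sup_left).index_ne_zero
    Subgroup.FiniteIndex.index_ne_zero

/-- If `Aut(G)` is residually finite and `H` is an Aut-splitting subgroup of
`G`, then `Aut(G) → Out(G)` splits virtually and `Out(G)` is residually finite. -/
theorem statement9 (G : Type*) [Group G] (hrf : ResiduallyFinite (MulAut G))
    (H : Subgroup G) (hH : IsAutSplitting G H) :
    SplitsVirtually (outProj G) ∧ ResiduallyFinite (Out G) := by
  obtain ⟨hker, himg⟩ := hH
  rw [residuallyFinite_iff_group_residuallyFinite] at hrf ⊢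
  set e := (outProj G).comp (autFix G H).subtype
  have : e.range.FiniteIndex := by rwa [MonoidHom.range_comp, Subgroup.range_subtype]
  obtain ⟨B', hB', s, hs_inj, hs⟩ := e.exists_injective_virtual_section
  refine ⟨⟨B', hB', (autFix G H).subtype.comp s, hs⟩, ?_⟩
  have : Group.ResiduallyFinite B' := .of_injective ((autFix G H).subtype.comp s)
    ((autFix G H).subtype_injective.comp hs_inj)
  exact Group.ResiduallyFinite.of_finiteIndex B'
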